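/- arXiv:0811.2002 — 2 statements merged into one kernel-verified Lean document; each statement's English description precedes it below -/
import Mathlib

section
/- Let ω be a nonzero real number and let F : ℝ³ → ℝ³ be a smooth vector field satisfying curl F = ω F everywhere on ℝ³. Then the fields E(x,t) = cos(ωt) F(x) and H(x,t) = −sin(ωt) F(x) satisfy, for all x ∈ ℝ³ and t ∈ ℝ: curl_x E(·,t)(x) = −∂H/∂t(x,t), curl_x H(·,t)(x) = ∂E/∂t(x,t), div_x E(·,t)(x) = 0, and div_x H(·,t)(x) = 0. -/
open scoped RealInnerProductSpace

noncomputable section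

/-- Euclidean 3-space. -/
abbrev R3 := EuclideanSpace ℝ (Fin 3)

/-- `pd F i j x` is the partial derivative `∂ᵢ Fⱼ (x)`:
the derivative of the `j`-th component of `F` in the `i`-th coordinate direction. -/
def pd (F : R3 → R3) (i j : Fin 3) (x : R3) : ℝ :=
  fderiv ℝ F x (EuclideanSpace.single i 1) j

/-- The curl of a vector field on ℝ³ (with 0-indexed coordinates):
`curl F = (∂₁F₂ − ∂₂F₁, ∂₂F₀ − ∂₀F₂, ∂₀F₁ − ∂₁F₀)`. -/
def curl (F : R3 → R3) (x : R3) : R3 :=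
  (WithLp.equiv 2 (Fin 3 → ℝ)).symm
    ![pd F 1 2 x - pd F 2 1 x,
      pd F 2 0 x - pd F 0 2 x,
      pd F 0 1 x - pd F 1 0 x]

/-- The divergence of a vector field on ℝ³: `div F = ∂₀F₀ + ∂₁F₁ + ∂₂F₂`. -/
def div3 (F : R3 → R3) (x : R3) : ℝ :=
  pd F 0 0 x + pd F 1 1 x + pd F 2 2 x


lemma pd_smul (F : R3 → R3) (hF : ContDiff ℝ (⊤ : ℕ∞) F) (c : ℝ) (i j : Fin 3) (x : R3) :
    pd (fun y => c • F y) i j x = c * pd F i j x := by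
  have hd : DifferentiableAt ℝ F x :=
    (hF.differentiable (by simp) x)
  simp only [pd, fderiv_fun_const_smul hd c]
  simp

lemma curl_smul (F : R3 → R3) (hF : ContDiff ℝ (⊤ : ℕ∞) F) (c : ℝ) (x : R3) :
    curl (fun y => c • F y) x = c • curl F x := by
  ext i
  fin_cases i <;>
    simp [curl, pd_smul F hF c, WithLp.equiv_symm_apply, PiLp.smul_apply,
      smul_eq_mul, mul_sub]


lemma div3_smul (F : R3 → R3) (hF : ContDiff ℝ (⊤ : ℕ∞) F) (c : ℝ) (x : R3) :
    div3 (fun y => c • F y) x = c * div3 F x := by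
  simp [div3, pd_smul F hF c, mul_add]

lemma hasFDerivAt_pd (F : R3 → R3) (hF : ContDiff ℝ (⊤ : ℕ∞) F) (x : R3) (a b : Fin 3) :
    HasFDerivAt (fun y => pd F a b y)
      (((EuclideanSpace.proj b).comp
          (ContinuousLinearMap.apply ℝ R3 (EuclideanSpace.single a 1))).comp
        (fderiv ℝ (fderiv ℝ F) x)) x := by
  have hF' : ContDiff ℝ (↑(⊤:ℕ∞)) F := hF.of_le (by simp)
  have hD : Differentiable ℝ (fderiv ℝ F) :=
    (contDiff_infty_iff_fderiv.mp hF').2.differentiable (by simp)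
  exact (((EuclideanSpace.proj b).comp
    (ContinuousLinearMap.apply ℝ R3 (EuclideanSpace.single a 1))).hasFDerivAt).comp x
    (hD x).hasFDerivAt

set_option maxHeartbeats 1000000 in
lemma div3_eq_zero (ω : ℝ) (hω : ω ≠ 0) (F : R3 → R3) (hF : ContDiff ℝ (⊤ : ℕ∞) F)
    (hBeltrami : ∀ x, curl F x = ω • F x) (x : R3) : div3 F x = 0 := by
  have hF' : ContDiff ℝ (↑(⊤:ℕ∞)) F := hF.of_le (by simp)
  have hdiff : Differentiable ℝ F := hF.differentiable (by simp)
  have hD : Differentiable ℝ (fderiv ℝ F) :=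
    (contDiff_infty_iff_fderiv.mp hF').2.differentiable (by simp)
  have hsymm : ∀ v w : R3, fderiv ℝ (fderiv ℝ F) x v w = fderiv ℝ (fderiv ℝ F) x w v :=
    second_derivative_symmetric (fun y => (hdiff y).hasFDerivAt) (hD x).hasFDerivAt
  have key : ∀ (i a b c d : Fin 3),
      (fun y => pd F a b y - pd F c d y) = (fun y => ω * F y i) →
      fderiv ℝ (fderiv ℝ F) x (EuclideanSpace.single i 1) (EuclideanSpace.single a 1) b
        - fderiv ℝ (fderiv ℝ F) x (EuclideanSpace.single i 1) (EuclideanSpace.single c 1) d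
        = ω * pd F i i x := by
    intro i a b c d heq
    have h1 : HasFDerivAt (fun y => pd F a b y - pd F c d y)
        ((((EuclideanSpace.proj b).comp
            (ContinuousLinearMap.apply ℝ R3 (EuclideanSpace.single a 1))).comp
            (fderiv ℝ (fderiv ℝ F) x)) -
         (((EuclideanSpace.proj d).comp
            (ContinuousLinearMap.apply ℝ R3 (EuclideanSpace.single c 1))).comp
            (fderiv ℝ (fderiv ℝ F) x))) x :=
      (hasFDerivAt_pd F hF x a b).sub (hasFDerivAt_pd F hF x c d)
    have hproj : HasFDerivAt (fun w : R3 => w i)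
        (EuclideanSpace.proj (𝕜 := ℝ) i) (F x) :=
      (EuclideanSpace.proj (𝕜 := ℝ) i).hasFDerivAt
    have h2' : HasFDerivAt (fun y => F y i)
        ((EuclideanSpace.proj (𝕜 := ℝ) i).comp (fderiv ℝ F x)) x :=
      hproj.comp x (hdiff x).hasFDerivAt
    have h2 : HasFDerivAt (fun y => ω * F y i)
        (ω • ((EuclideanSpace.proj i).comp (fderiv ℝ F x))) x := h2'.const_mul ω
    rw [heq] at h1
    have h3 := h1.unique h2
    have happ := congrArg (fun (L : R3 →L[ℝ] ℝ) => L (EuclideanSpace.single i 1)) h3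
    simpa [pd] using happ
  have comp_eq : ∀ (y : R3) (j : Fin 3), curl F y j = ω * F y j := by
    intro y j
    have h := congrFun (congrArg (fun (v : R3) (j : Fin 3) => v j) (hBeltrami y)) j
    simpa [PiLp.smul_apply, smul_eq_mul] using h
  have h0 := key 0 1 2 2 1 (by
    funext y
    have := comp_eq y 0
    simpa [curl, WithLp.equiv_symm_apply] using this)
  have h1 := key 1 2 0 0 2 (by
    funext y
    have := comp_eq y 1
    simpa [curl, WithLp.equiv_symm_apply] using this)
  have h2 := key 2 0 1 1 0 (by
    funext y
    have := comp_eq y 2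
    simpa [curl, WithLp.equiv_symm_apply] using this)
  have c01 := congrFun (congrArg (fun (v : R3) (j : Fin 3) => v j)
    (hsymm (EuclideanSpace.single 0 1) (EuclideanSpace.single 1 1))) 2
  have c02 := congrFun (congrArg (fun (v : R3) (j : Fin 3) => v j)
    (hsymm (EuclideanSpace.single 0 1) (EuclideanSpace.single 2 1))) 1
  have c12 := congrFun (congrArg (fun (v : R3) (j : Fin 3) => v j)
    (hsymm (EuclideanSpace.single 1 1) (EuclideanSpace.single 2 1))) 0
  simp only at c01 c02 c12
  have hsum : ω * div3 F x = 0 := by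
    simp only [div3, mul_add]
    rw [← h0, ← h1, ← h2]
    linarith [c01, c02, c12]
  exact (mul_eq_zero.mp hsum).resolve_left hω


/-- If `curl F = ω F` on ℝ³ (`ω ≠ 0`), then
`E(x,t) = cos(ωt) F(x)`, `H(x,t) = −sin(ωt) F(x)` solve the source-less vacuum
Maxwell equations. -/
theorem beltrami_field_gives_maxwell_solution
    (ω : ℝ) (hω : ω ≠ 0) (F : R3 → R3) (hF : ContDiff ℝ (⊤ : ℕ∞) F)
    (hBeltrami : ∀ x, curl F x = ω • F x) :
    (∀ (x : R3) (t : ℝ),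
      curl (fun y => Real.cos (ω * t) • F y) x
        = - deriv (fun s => (-Real.sin (ω * s)) • F x) t) ∧
    (∀ (x : R3) (t : ℝ),
      curl (fun y => (-Real.sin (ω * t)) • F y) x
        = deriv (fun s => Real.cos (ω * s) • F x) t) ∧
    (∀ (x : R3) (t : ℝ), div3 (fun y => Real.cos (ω * t) • F y) x = 0) ∧
    (∀ (x : R3) (t : ℝ), div3 (fun y => (-Real.sin (ω * t)) • F y) x = 0) := by
  have hmul : ∀ t : ℝ, HasDerivAt (fun s : ℝ => ω * s) ω t := fun t => by
    simpa using (hasDerivAt_id t).const_mul ω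
  have hsin : ∀ t : ℝ, HasDerivAt (fun s => Real.sin (ω * s)) (Real.cos (ω * t) * ω) t :=
    fun t => (Real.hasDerivAt_sin (ω * t)).comp t (hmul t)
  have hcos : ∀ t : ℝ, HasDerivAt (fun s => Real.cos (ω * s)) (-Real.sin (ω * t) * ω) t :=
    fun t => (Real.hasDerivAt_cos (ω * t)).comp t (hmul t)
  have hdiv0 : ∀ y, div3 F y = 0 := div3_eq_zero ω hω F hF hBeltrami
  refine ⟨?_, ?_, ?_, ?_⟩
  · intro x t
    have hH : deriv (fun s => (-Real.sin (ω * s)) • F x) t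
        = (-(Real.cos (ω * t) * ω)) • F x := (((hsin t).neg).smul_const (F x)).deriv
    rw [hH, curl_smul F hF, hBeltrami x, smul_smul]
    module
  · intro x t
    have hE : deriv (fun s => Real.cos (ω * s) • F x) t
        = (-Real.sin (ω * t) * ω) • F x := ((hcos t).smul_const (F x)).deriv
    rw [hE, curl_smul F hF, hBeltrami x, smul_smul]
  · intro x t
    rw [div3_smul F hF, hdiv0 x, mul_zero]
  · intro x t
    rw [div3_smul F hF, hdiv0 x, mul_zero]

end
end

section
/- Let F : ℝ³ → ℝ³ be a continuously differentiable vector field that is nowhere zero, and suppose curl F = f · F for a function f : ℝ³ → ℝ that is nowhere zero. Let X, Y : ℝ³ → ℝ³ be continuously differentiable vector fields with ⟪F(x), X(x)⟫ = 0 and ⟪F(x), Y(x)⟫ = 0 for all x ∈ ℝ³, and let x₀ ∈ ℝ³ be a point at which X(x₀) and Y(x₀) are linearly independent. Then ⟪F(x₀), [X,Y](x₀)⟫ ≠ 0, where [X,Y](x) = (DY)(x)·X(x) − (DX)(x)·Y(x) is the Lie bracket (DX denoting the total derivative of X). In particular, the plane field ker F♭ = {v : ⟪F, v⟫ = 0}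 is nowhere integrable. -/
open scoped RealInnerProductSpace

noncomputable section

/-! Differentiating `⟪F, Y⟫ = 0` along `X` and `⟪F, X⟫ = 0` along `Y` gives
`⟪F, [X, Y]⟫ = -(⟪DF·X, Y⟫ - ⟪DF·Y, X⟫) = -dF♭(X, Y)`, and `dF♭(X, Y) = ⟪curl F, X × Y⟫`.
For a Beltrami field this is `f · det (F, X, Y)`, which does not vanish: `F` is a nonzero normal
to the plane spanned by the independent vectors `X` and `Y`, so `F, X, Y` is a basis. -/

lemma inner_fderiv_eq_neg_of_inner_eq_zero {E H : Type*} [NormedAddCommGroup E]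
    [NormedSpace ℝ E] [NormedAddCommGroup H] [InnerProductSpace ℝ H] {F G : E → H} {x : E}
    (hF : DifferentiableAt ℝ F x) (hG : DifferentiableAt ℝ G x)
    (h : ∀ y, ⟪F y, G y⟫ = 0) (v : E) :
    ⟪F x, fderiv ℝ G x v⟫ = -⟪fderiv ℝ F x v, G x⟫ := by
  have hderiv := fderiv_inner_apply ℝ hF hG v
  rw [show (fun y => ⟪F y, G y⟫) = fun _ => (0 : ℝ) from funext h, fderiv_fun_const,
    Pi.zero_apply, zero_apply] at hderiv
  linarith

lemma inner_lieBracket_eq_of_inner_eq_zero {E : Type*} [NormedAddCommGroup E]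
    [InnerProductSpace ℝ E] {F X Y : E → E} {x : E}
    (hF : DifferentiableAt ℝ F x) (hX : DifferentiableAt ℝ X x) (hY : DifferentiableAt ℝ Y x)
    (hXF : ∀ y, ⟪F y, X y⟫ = 0) (hYF : ∀ y, ⟪F y, Y y⟫ = 0) :
    ⟪F x, VectorField.lieBracket ℝ X Y x⟫ =
      -(⟪fderiv ℝ F x (X x), Y x⟫ - ⟪fderiv ℝ F x (Y x), X x⟫) := by
  rw [VectorField.lieBracket, inner_sub_right, inner_fderiv_eq_neg_of_inner_eq_zero hF hY hYF,
    inner_fderiv_eq_neg_of_inner_eq_zero hF hX hXF]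
  ring

lemma linearIndependent_finCons_of_inner_eq_zero {H : Type*} [NormedAddCommGroup H]
    [InnerProductSpace ℝ H] {n : ℕ} {u : H} {v : Fin n → H} (hu : u ≠ 0)
    (huv : ∀ i, ⟪u, v i⟫ = 0) (hv : LinearIndependent ℝ v) :
    LinearIndependent ℝ (Fin.cons u v : Fin (n + 1) → H) := by
  refine linearIndependent_finCons.mpr ⟨hv, fun hmem => hu ?_⟩
  have hspan : Submodule.span ℝ (Set.range v) ≤ (ℝ ∙ u)ᗮ := by
    rw [Submodule.span_le]
    rintro _ ⟨i, rfl⟩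
    exact Submodule.mem_orthogonal_singleton_iff_inner_right.mpr (huv i)
  exact inner_self_eq_zero.mp (Submodule.mem_orthogonal_singleton_iff_inner_right.mp (hspan hmem))

lemma det_ne_zero_of_inner_eq_zero {u v w : R3} (hu : u ≠ 0) (huv : ⟪u, v⟫ = 0)
    (huw : ⟪u, w⟫ = 0) (hvw : LinearIndependent ℝ ![v, w]) :
    (Matrix.of ![⇑u, ⇑v, ⇑w]).det ≠ 0 := by
  have hind : LinearIndependent ℝ ![u, v, w] :=
    linearIndependent_finCons_of_inner_eq_zero hu (Fin.forall_fin_two.mpr ⟨huv, huw⟩) hvw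
  have hrows : LinearIndependent ℝ (Matrix.of ![⇑u, ⇑v, ⇑w]).row := by
    rw [show (Matrix.of ![⇑u, ⇑v, ⇑w]).row = WithLp.linearEquiv 2 ℝ (Fin 3 → ℝ) ∘ ![u, v, w] by
      ext i : 1; fin_cases i <;> rfl]
    exact hind.map' _ (LinearEquiv.ker _)
  exact ((Matrix.isUnit_iff_isUnit_det _).mp
    (Matrix.linearIndependent_rows_iff_isUnit.mp hrows)).ne_zero

lemma fderiv_apply_eq_sum_pd (F : R3 → R3) (x v : R3) (j : Fin 3) :
    fderiv ℝ F x v j = ∑ i, v i * pd F i j x := by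
  conv_lhs => rw [← (EuclideanSpace.basisFun (Fin 3) ℝ).sum_repr v]
  simp [pd]

lemma inner_fderiv_sub_inner_fderiv_eq_det_curl (F : R3 → R3) (x v w : R3) :
    ⟪fderiv ℝ F x v, w⟫ - ⟪fderiv ℝ F x w, v⟫ = (Matrix.of ![⇑(curl F x), ⇑v, ⇑w]).det := by
  rw [Matrix.det_fin_three]
  simp only [PiLp.inner_apply, RCLike.inner_apply, Real.ringHom_apply, fderiv_apply_eq_sum_pd,
    Fin.sum_univ_three, curl, WithLp.equiv_symm_apply, Matrix.of_apply, Matrix.cons_val',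
    Matrix.cons_val_zero, Matrix.cons_val_one, Matrix.cons_val, Matrix.cons_val_fin_one]
  ring

lemma inner_fderiv_sub_inner_fderiv_eq_mul_det {F : R3 → R3} {f : R3 → ℝ} {x : R3}
    (hcurl : curl F x = f x • F x) (v w : R3) :
    ⟪fderiv ℝ F x v, w⟫ - ⟪fderiv ℝ F x w, v⟫ = f x * (Matrix.of ![⇑(F x), ⇑v, ⇑w]).det := by
  rw [inner_fderiv_sub_inner_fderiv_eq_det_curl, hcurl, Matrix.det_fin_three, Matrix.det_fin_three]
  simp only [WithLp.ofLp_smul, Pi.smul_apply, smul_eq_mul, Matrix.of_apply, Matrix.cons_val',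
    Matrix.cons_val_zero, Matrix.cons_val_one, Matrix.cons_val, Matrix.cons_val_fin_one]
  ring

/-- If `F` is a nowhere-zero `C¹` rotational Beltrami field
(`curl F = f F` with `f` nowhere zero), and `X`, `Y` are `C¹` sections of the plane
field `ker F♭` that are linearly independent at `x₀`, then the Lie bracket
`[X,Y](x₀) = DY(x₀)·X(x₀) − DX(x₀)·Y(x₀)` is not orthogonal to `F(x₀)`;
i.e. the plane field `ker F♭` is nowhere integrable. -/
theorem rotational_beltrami_plane_field_nonintegrable
    (F : R3 → R3) (hF : ContDiff ℝ 1 F) (hFne : ∀ x, F x ≠ 0)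
    (f : R3 → ℝ) (hfne : ∀ x, f x ≠ 0)
    (hBeltrami : ∀ x, curl F x = f x • F x)
    (X Y : R3 → R3) (hX : ContDiff ℝ 1 X) (hY : ContDiff ℝ 1 Y)
    (hXker : ∀ x, ⟪F x, X x⟫ = 0) (hYker : ∀ x, ⟪F x, Y x⟫ = 0)
    (x₀ : R3) (hindep : LinearIndependent ℝ ![X x₀, Y x₀]) :
    ⟪F x₀, fderiv ℝ Y x₀ (X x₀) - fderiv ℝ X x₀ (Y x₀)⟫ ≠ 0 := by
  have hFd : DifferentiableAt ℝ F x₀ := hF.differentiable one_ne_zero x₀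
  have hXd : DifferentiableAt ℝ X x₀ := hX.differentiable one_ne_zero x₀
  have hYd : DifferentiableAt ℝ Y x₀ := hY.differentiable one_ne_zero x₀
  change ⟪F x₀, VectorField.lieBracket ℝ X Y x₀⟫ ≠ 0
  rw [inner_lieBracket_eq_of_inner_eq_zero hFd hXd hYd hXker hYker,
    inner_fderiv_sub_inner_fderiv_eq_mul_det (hBeltrami x₀), neg_ne_zero]
  exact mul_ne_zero (hfne x₀)
    (det_ne_zero_of_inner_eq_zero (hFne x₀) (hXker x₀) (hYker x₀) hindep)

end
end
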